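/- Let ξ_1, …, ξ_8, α_1, …, α_8, β_1, …, β_8, γ_1, …, γ_8, δ, π, τ_1, …, τ_5, φ_1, φ_2, φ_3 be nonnegative real numbers and y a real number satisfying: Σ_{i=1}^{8} ξ_i = 1; ξ_i = α_i + β_i for every i ∈ {1,…,8}; π = τ_1 + τ_2 + τ_3 + τ_4 + τ_5; τ_1 = φ_1 + φ_2 + φ_3; α_i ≥ β_i for i ∈ {1,3,4,8}; τ_3 = β_7; τ_4 = β_5; β_5 ≥ α_5; δ ≥ π + α_1 + β_2; δ ≥ π − τ_1 − τ_2 + α_1 + γ_2 + α_3 + α_4 + α_6; δ ≥ π − τ_1 + α_1 + β_2 + α_6; δ ≥ π − φ_3 − τ_2 + α_1 + γ_2 + α_3 + α_4; π ≥ Σ_{i=1}^{8} γ_i; γ_i ≥ α_i and γ_i ≥ β_i for every i ∈ {1,…,8}; y ≥ (2/3)δ + 1/2 − (1/2)·Σ_{i=1}^{8} γ_i; y ≥ (2/3)π + (1/12)φ_1 + (1/6)φ_2 + (1/4)φ_3 + (1/6)τ_2 + (1/4)τ_3 + (1/3)τ_4 + (1/2)α_2 + (1/2)α_3 + (1/2)α_4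 + α_5 + (1/2)α_7 − (1/4)β_7 + (1/4)ξ_6 + (1/4)ξ_8; and y ≥ (4/9)·(2β_5 + 2β_6 + ξ_7 + ξ_8 + γ_7 + γ_8). Then y ≥ 10/17. -/
import Mathlib


open Finset
open scoped Classical

namespace MW3PP

/-- A 3-path `xyz`: a path on three distinct vertices with middle vertex `y`. -/
structure P3 (V : Type*) where
  x : V
  y : V
  z : V
  hxy : x ≠ y
  hyz : y ≠ z
  hxz : x ≠ z

variable {V : Type*} [Fintype V] [DecidableEq V]

/-- The vertex set of a 3-path. -/
def P3.verts (p : P3 V) : Finset V := {p.x, p.y, p.z}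

/-- The two edges of a 3-path. -/
def P3.edges (p : P3 V) : Finset (Sym2 V) := {s(p.x, p.y), s(p.y, p.z)}

/-- The weight of a 3-path. -/
def P3.wt (w : Sym2 V → ℝ) (p : P3 V) : ℝ := w s(p.x, p.y) + w s(p.y, p.z)

/-- The total weight of a set of edges. -/
def ew (w : Sym2 V → ℝ) (F : Finset (Sym2 V)) : ℝ := ∑ e ∈ F, w e

/-- The total weight of a set of 3-paths. -/
def pw (w : Sym2 V → ℝ) (P : Finset (P3 V)) : ℝ := ∑ p ∈ P, p.wt w

/-- `∑_{xyz ∈ S} max (w (xy)) (w (yz))`. -/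
def maxSum (w : Sym2 V → ℝ) (S : Finset (P3 V)) : ℝ :=
  ∑ p ∈ S, max (w s(p.x, p.y)) (w s(p.y, p.z))

/-- A perfect 3-path packing: `n/3` pairwise vertex-disjoint 3-paths covering all vertices. -/
def IsPacking (P : Finset (P3 V)) : Prop :=
  P.card = Fintype.card V / 3 ∧
  (∀ p ∈ P, ∀ q ∈ P, p ≠ q → Disjoint p.verts q.verts) ∧
  (∀ v : V, ∃ p ∈ P, v ∈ p.verts)

/-- A maximum-weight perfect 3-path packing. -/
def IsMaxPacking (w : Sym2 V → ℝ) (P : Finset (P3 V)) : Prop :=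
  IsPacking P ∧ ∀ Q : Finset (P3 V), IsPacking Q → pw w Q ≤ pw w P

/-- A matching: a set of pairwise vertex-disjoint (non-loop) edges. -/
def IsMatching (M : Finset (Sym2 V)) : Prop :=
  (∀ e ∈ M, ¬ e.IsDiag) ∧
  ∀ e ∈ M, ∀ f ∈ M, e ≠ f → ∀ v : V, v ∈ e → v ∉ f

/-- A maximum-weight matching among all matchings of size `k`. -/
def IsMaxMatchingOfSize (w : Sym2 V → ℝ) (k : ℕ) (M : Finset (Sym2 V)) : Prop :=
  IsMatching M ∧ M.card = k ∧
  ∀ M' : Finset (Sym2 V), IsMatching M' → M'.card = k → ew w M' ≤ ew w M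

/-- `v ∈ V(M)` : vertex `v` is covered by the matching `M`. -/
def covered (M : Finset (Sym2 V)) (v : V) : Prop := ∃ e ∈ M, v ∈ e

/-- `e_u` : the edge of `M` containing `u` (junk value if there is none). -/
noncomputable def eMatch (M : Finset (Sym2 V)) (u : V) : Sym2 V :=
  if h : ∃ e ∈ M, u ∈ e then h.choose else s(u, u)

/-- The cost `c` of an edge with respect to a matching `M`:
`c(uv) = w(uv) - min (w (e_u)) (w (e_v))` if both endpoints are covered by `M`,
and `c(uv) = w(uv)` otherwise. -/
noncomputable def cost (w : Sym2 V → ℝ) (M : Finset (Sym2 V)) : Sym2 V → ℝ :=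
  Sym2.lift ⟨fun u v =>
    if covered M u ∧ covered M v then
      w s(u, v) - min (w (eMatch M u)) (w (eMatch M v))
    else w s(u, v), by
      intro u v
      dsimp only
      by_cases h : covered M u ∧ covered M v
      · rw [if_pos h, if_pos (show covered M v ∧ covered M u from ⟨h.2, h.1⟩),
          Sym2.eq_swap, min_comm]
      · rw [if_neg h, if_neg (show ¬(covered M v ∧ covered M u) from fun h' => h ⟨h'.2, h'.1⟩),
          Sym2.eq_swap]⟩

/-- The total cost of a set of edges. -/
noncomputable def cw (w : Sym2 V → ℝ) (M F : Finset (Sym2 V)) : ℝ := ∑ e ∈ F, cost w M e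

/-- The number of vertices of the 3-path `p` covered by `M`. -/
noncomputable def kcnt (M : Finset (Sym2 V)) (p : P3 V) : ℕ :=
  (p.verts.filter fun v => covered M v).card

/-- Exactly one of the two edges of `p` lies in `M`. -/
def exOne (M : Finset (Sym2 V)) (p : P3 V) : Prop :=
  (s(p.x, p.y) ∈ M ∧ s(p.y, p.z) ∉ M) ∨ (s(p.x, p.y) ∉ M ∧ s(p.y, p.z) ∈ M)

def cls1 (M : Finset (Sym2 V)) (p : P3 V) : Prop := kcnt M p = 0
def cls2 (M : Finset (Sym2 V)) (p : P3 V) : Prop := kcnt M p = 1 ∧ ¬ covered M p.y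
def cls3 (M : Finset (Sym2 V)) (p : P3 V) : Prop := kcnt M p = 1 ∧ covered M p.y
def cls4 (M : Finset (Sym2 V)) (p : P3 V) : Prop := kcnt M p = 2 ∧ ¬ covered M p.y
def cls5 (M : Finset (Sym2 V)) (p : P3 V) : Prop := kcnt M p = 2 ∧ covered M p.y ∧ exOne M p
def cls6 (M : Finset (Sym2 V)) (p : P3 V) : Prop :=
  kcnt M p = 2 ∧ covered M p.y ∧ s(p.x, p.y) ∉ M ∧ s(p.y, p.z) ∉ M
def cls7 (M : Finset (Sym2 V)) (p : P3 V) : Prop := kcnt M p = 3 ∧ exOne M p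
def cls8 (M : Finset (Sym2 V)) (p : P3 V) : Prop :=
  kcnt M p = 3 ∧ s(p.x, p.y) ∉ M ∧ s(p.y, p.z) ∉ M

/-- The subset of a set of 3-paths satisfying a predicate. -/
noncomputable def psel (P : Finset (P3 V)) (c : P3 V → Prop) : Finset (P3 V) := P.filter c

/-- The set of all edges of the 3-paths in `S`. -/
def Esub (S : Finset (P3 V)) : Finset (Sym2 V) := S.biUnion P3.edges

/-- The heaviest edge of a 3-path (the edge `xy` in case of a tie). -/
noncomputable def heavy (w : Sym2 V → ℝ) (p : P3 V) : Sym2 V :=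
  if w s(p.y, p.z) ≤ w s(p.x, p.y) then s(p.x, p.y) else s(p.y, p.z)

noncomputable def X1 (w : Sym2 V → ℝ) (P : Finset (P3 V)) (M : Finset (Sym2 V)) :
    Finset (Sym2 V) := (psel P (cls1 M)).image (heavy w)
noncomputable def X2 (P : Finset (P3 V)) (M : Finset (Sym2 V)) : Finset (Sym2 V) :=
  (psel P (cls2 M)).image fun p => if covered M p.x then s(p.x, p.y) else s(p.y, p.z)
noncomputable def X3 (w : Sym2 V → ℝ) (P : Finset (P3 V)) (M : Finset (Sym2 V)) :
    Finset (Sym2 V) := (psel P (cls3 M)).image (heavy w)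
noncomputable def X4 (w : Sym2 V → ℝ) (P : Finset (P3 V)) (M : Finset (Sym2 V)) :
    Finset (Sym2 V) := (psel P (cls4 M)).image (heavy w)
noncomputable def X5 (P : Finset (P3 V)) (M : Finset (Sym2 V)) : Finset (Sym2 V) :=
  (psel P (cls5 M)).image fun p => if s(p.x, p.y) ∈ M then s(p.y, p.z) else s(p.x, p.y)
noncomputable def X6 (P : Finset (P3 V)) (M : Finset (Sym2 V)) : Finset (Sym2 V) :=
  (psel P (cls6 M)).image fun p => if covered M p.x then s(p.y, p.z) else s(p.x, p.y)
noncomputable def X7 (P : Finset (P3 V)) (M : Finset (Sym2 V)) : Finset (Sym2 V) :=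
  (psel P (cls7 M)).image fun p => if s(p.x, p.y) ∈ M then s(p.y, p.z) else s(p.x, p.y)
noncomputable def X8 (w : Sym2 V → ℝ) (P : Finset (P3 V)) (M : Finset (Sym2 V)) :
    Finset (Sym2 V) := (psel P (cls8 M)).image (heavy w)

noncomputable def Y1 (w : Sym2 V → ℝ) (P : Finset (P3 V)) (M : Finset (Sym2 V)) :
    Finset (Sym2 V) := Esub (psel P (cls1 M)) \ X1 w P M
noncomputable def Y2 (P : Finset (P3 V)) (M : Finset (Sym2 V)) : Finset (Sym2 V) :=
  Esub (psel P (cls2 M)) \ X2 P M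
noncomputable def Y3 (w : Sym2 V → ℝ) (P : Finset (P3 V)) (M : Finset (Sym2 V)) :
    Finset (Sym2 V) := Esub (psel P (cls3 M)) \ X3 w P M
noncomputable def Y4 (w : Sym2 V → ℝ) (P : Finset (P3 V)) (M : Finset (Sym2 V)) :
    Finset (Sym2 V) := Esub (psel P (cls4 M)) \ X4 w P M
noncomputable def Y5 (P : Finset (P3 V)) (M : Finset (Sym2 V)) : Finset (Sym2 V) :=
  Esub (psel P (cls5 M)) \ X5 P M
noncomputable def Y6 (P : Finset (P3 V)) (M : Finset (Sym2 V)) : Finset (Sym2 V) :=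
  Esub (psel P (cls6 M)) \ X6 P M
noncomputable def Y7 (P : Finset (P3 V)) (M : Finset (Sym2 V)) : Finset (Sym2 V) :=
  Esub (psel P (cls7 M)) \ X7 P M
noncomputable def Y8 (w : Sym2 V → ℝ) (P : Finset (P3 V)) (M : Finset (Sym2 V)) :
    Finset (Sym2 V) := Esub (psel P (cls8 M)) \ X8 w P M

/-- An edge is a middle edge (w.r.t. `M`) if exactly one of its endpoints lies in `V(M)`. -/
def isMiddle (M : Finset (Sym2 V)) (e : Sym2 V) : Prop :=
  ∃ u v : V, e = s(u, v) ∧ covered M u ∧ ¬ covered M v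

/-- Two edges share a vertex. -/
def shares (e f : Sym2 V) : Prop := ∃ v, v ∈ e ∧ v ∈ f

/-- `g` is a middle edge of some 3-path in `S`. -/
def middleIn (M : Finset (Sym2 V)) (S : Finset (P3 V)) (g : Sym2 V) : Prop :=
  (∃ p ∈ S, g ∈ p.edges) ∧ isMiddle M g

/-- The 3-paths of `P` lying in classes 2, 3 or 4. -/
noncomputable def P234 (P : Finset (P3 V)) (M : Finset (Sym2 V)) : Finset (P3 V) :=
  psel P fun p => cls2 M p ∨ cls3 M p ∨ cls4 M p

/-- `M_1`: edges of `M` sharing a vertex with at least one middle edge of a 3-path of `P*_6`. -/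
noncomputable def Mset1 (P : Finset (P3 V)) (M : Finset (Sym2 V)) : Finset (Sym2 V) :=
  M.filter fun f => ∃ g, middleIn M (psel P (cls6 M)) g ∧ shares f g

/-- `M_2`: edges of `M` sharing a vertex with at least one middle edge, all middle edges met
belonging to 3-paths of `P*_2 ∪ P*_3 ∪ P*_4`. -/
noncomputable def Mset2 (P : Finset (P3 V)) (M : Finset (Sym2 V)) : Finset (Sym2 V) :=
  M.filter fun f =>
    (∃ g, middleIn M P g ∧ shares f g) ∧
    ∀ g, middleIn M P g → shares f g → middleIn M (P234 P M) g

/-- `M_3 = M ∩ E(P*_7)`. -/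
noncomputable def Mset3 (P : Finset (P3 V)) (M : Finset (Sym2 V)) : Finset (Sym2 V) :=
  M ∩ Esub (psel P (cls7 M))

/-- `M_4 = M ∩ E(P*_5)`. -/
noncomputable def Mset4 (P : Finset (P3 V)) (M : Finset (Sym2 V)) : Finset (Sym2 V) :=
  M ∩ Esub (psel P (cls5 M))

/-- The middle edges of 3-paths of `P*_6`. -/
noncomputable def mid6 (P : Finset (P3 V)) (M : Finset (Sym2 V)) : Finset (Sym2 V) :=
  (Esub (psel P (cls6 M))).filter (isMiddle M)

/-- `M'_1`: edges of `M_1` meeting exactly one middle edge of a 3-path of `P*_6` and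
no middle edge of a 3-path of `P*_2 ∪ P*_3 ∪ P*_4`. -/
noncomputable def Mset1' (P : Finset (P3 V)) (M : Finset (Sym2 V)) : Finset (Sym2 V) :=
  (Mset1 P M).filter fun f =>
    ((mid6 P M).filter fun g => shares f g).card = 1 ∧
    ∀ g, middleIn M (P234 P M) g → ¬ shares f g

/-- `M''_1`: edges of `M_1` meeting two middle edges of 3-paths of `P*_6`. -/
noncomputable def Mset1'' (P : Finset (P3 V)) (M : Finset (Sym2 V)) : Finset (Sym2 V) :=
  (Mset1 P M).filter fun f => ((mid6 P M).filter fun g => shares f g).card = 2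

/-- `M'''_1`: edges of `M_1` meeting exactly one middle edge of a 3-path of `P*_6` and
at least one middle edge of a 3-path of `P*_2 ∪ P*_3 ∪ P*_4`. -/
noncomputable def Mset1''' (P : Finset (P3 V)) (M : Finset (Sym2 V)) : Finset (Sym2 V) :=
  (Mset1 P M).filter fun f =>
    ((mid6 P M).filter fun g => shares f g).card = 1 ∧
    ∃ g, middleIn M (P234 P M) g ∧ shares f g

/-- Assumption on `P*`: for every 3-path `xyz ∈ P*` with `y ∉ V(M)` and `x, z ∈ V(M)`,
the vertices `x` and `z` lie in two distinct edges of `M`. -/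
def Ass (P : Finset (P3 V)) (M : Finset (Sym2 V)) : Prop :=
  ∀ p ∈ P, ¬ covered M p.y → covered M p.x → covered M p.z →
    ∃ e ∈ M, ∃ f ∈ M, p.x ∈ e ∧ p.z ∈ f ∧ e ≠ f

/-- An admissible edge w.r.t. `M`: either both endpoints are in `V(M)` and lie in two distinct
edges of `M`, or exactly one endpoint is in `V(M)`. -/
def goodEdge (M : Finset (Sym2 V)) (e : Sym2 V) : Prop :=
  (∃ u v : V, e = s(u, v) ∧ covered M u ∧ covered M v ∧ ∀ f ∈ M, ¬(u ∈ f ∧ v ∈ f)) ∨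
  (∃ u v : V, e = s(u, v) ∧ covered M u ∧ ¬ covered M v)


theorem statement_17
    (ξ1 ξ2 ξ3 ξ4 ξ5 ξ6 ξ7 ξ8 : ℝ) (α1 α2 α3 α4 α5 α6 α7 α8 : ℝ)
    (β1 β2 β3 β4 β5 β6 β7 β8 : ℝ) (γ1 γ2 γ3 γ4 γ5 γ6 γ7 γ8 : ℝ)
    (δ piv τ1 τ2 τ3 τ4 τ5 φ1 φ2 φ3 : ℝ) (y : ℝ)
    (hξ1 : 0 ≤ ξ1) (hξ2 : 0 ≤ ξ2) (hξ3 : 0 ≤ ξ3) (hξ4 : 0 ≤ ξ4)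
    (hξ5 : 0 ≤ ξ5) (hξ6 : 0 ≤ ξ6) (hξ7 : 0 ≤ ξ7) (hξ8 : 0 ≤ ξ8)
    (hα1 : 0 ≤ α1) (hα2 : 0 ≤ α2) (hα3 : 0 ≤ α3) (hα4 : 0 ≤ α4)
    (hα5 : 0 ≤ α5) (hα6 : 0 ≤ α6) (hα7 : 0 ≤ α7) (hα8 : 0 ≤ α8)
    (hβ1 : 0 ≤ β1) (hβ2 : 0 ≤ β2) (hβ3 : 0 ≤ β3) (hβ4 : 0 ≤ β4)
    (hβ5 : 0 ≤ β5) (hβ6 : 0 ≤ β6) (hβ7 : 0 ≤ β7) (hβ8 : 0 ≤ β8)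
    (hγ1 : 0 ≤ γ1) (hγ2 : 0 ≤ γ2) (hγ3 : 0 ≤ γ3) (hγ4 : 0 ≤ γ4)
    (hγ5 : 0 ≤ γ5) (hγ6 : 0 ≤ γ6) (hγ7 : 0 ≤ γ7) (hγ8 : 0 ≤ γ8)
    (hδ : 0 ≤ δ) (hpiv : 0 ≤ piv)
    (hτ1 : 0 ≤ τ1) (hτ2 : 0 ≤ τ2) (hτ3 : 0 ≤ τ3) (hτ4 : 0 ≤ τ4) (hτ5 : 0 ≤ τ5)
    (hφ1 : 0 ≤ φ1) (hφ2 : 0 ≤ φ2) (hφ3 : 0 ≤ φ3)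
    (hsum : ξ1 + ξ2 + ξ3 + ξ4 + ξ5 + ξ6 + ξ7 + ξ8 = 1)
    (he1 : ξ1 = α1 + β1) (he2 : ξ2 = α2 + β2) (he3 : ξ3 = α3 + β3) (he4 : ξ4 = α4 + β4)
    (he5 : ξ5 = α5 + β5) (he6 : ξ6 = α6 + β6) (he7 : ξ7 = α7 + β7) (he8 : ξ8 = α8 + β8)
    (hpi : piv = τ1 + τ2 + τ3 + τ4 + τ5)
    (htau : τ1 = φ1 + φ2 + φ3)
    (hab1 : α1 ≥ β1) (hab3 : α3 ≥ β3) (hab4 : α4 ≥ β4) (hab8 : α8 ≥ β8)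
    (ht3 : τ3 = β7) (ht4 : τ4 = β5) (hb5 : β5 ≥ α5)
    (hd1 : δ ≥ piv + α1 + β2)
    (hd2 : δ ≥ piv - τ1 - τ2 + α1 + γ2 + α3 + α4 + α6)
    (hd3 : δ ≥ piv - τ1 + α1 + β2 + α6)
    (hd4 : δ ≥ piv - φ3 - τ2 + α1 + γ2 + α3 + α4)
    (hpg : piv ≥ γ1 + γ2 + γ3 + γ4 + γ5 + γ6 + γ7 + γ8)
    (hga1 : γ1 ≥ α1) (hga2 : γ2 ≥ α2) (hga3 : γ3 ≥ α3) (hga4 : γ4 ≥ α4)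
    (hga5 : γ5 ≥ α5) (hga6 : γ6 ≥ α6) (hga7 : γ7 ≥ α7) (hga8 : γ8 ≥ α8)
    (hgb1 : γ1 ≥ β1) (hgb2 : γ2 ≥ β2) (hgb3 : γ3 ≥ β3) (hgb4 : γ4 ≥ β4)
    (hgb5 : γ5 ≥ β5) (hgb6 : γ6 ≥ β6) (hgb7 : γ7 ≥ β7) (hgb8 : γ8 ≥ β8)
    (hy1 : y ≥ (2 / 3) * δ + 1 / 2 - (1 / 2) * (γ1 + γ2 + γ3 + γ4 + γ5 + γ6 + γ7 + γ8))
    (hy2 : y ≥ (2 / 3) * piv + (1 / 12) * φ1 + (1 / 6) * φ2 + (1 / 4) * φ3 + (1 / 6) * τ2 +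
      (1 / 4) * τ3 + (1 / 3) * τ4 + (1 / 2) * α2 + (1 / 2) * α3 + (1 / 2) * α4 + α5 +
      (1 / 2) * α7 - (1 / 4) * β7 + (1 / 4) * ξ6 + (1 / 4) * ξ8)
    (hy3 : y ≥ (4 / 9) * (2 * β5 + 2 * β6 + ξ7 + ξ8 + γ7 + γ8)) :
    y ≥ 10 / 17 := by
  linarith

end MW3PP
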